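/- Let H be a complex Hilbert space and let Φ : B(H) → B(H) be a unital completely positive linear map that is continuous with respect to the weak operator topology. Define C₂ = {A ∈ B(H) : Φ(A) = A, Φ(A*A) = A*A, and Φ(AA*) = AA*}. Then: (a) C₂ = {A ∈ B(H) : Φ(b) = b for every b ∈ C*(1,A)}; (b) C₂ is a star-subalgebra of B(H) containing the identity (closed under addition, multiplication, scalar multiplication and adjoints); and (c) C₂ is closed in the weak operator topology. -/

import Mathlib

/-!
Complete positivity makes `Φ(aᵢ* aⱼ)` a Gram matrix `∑ₖ Pₖᵢ* Pₖⱼ`. For the triple `(1, a, b)`,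
if `Φ(a*a) = Φ(a)*Φ(a)` the Gram vectors `p, q` of `1, a` satisfy `⟪q - pΦ(a), q - pΦ(a)⟫ = 0`,
so `q = pΦ(a)` and `Φ(a*b) = Φ(a)*Φ(b)` (Choi). Hence `C₂` is the set of fixed points `b` of `Φ`
with `Φ(bc) = bΦ(c)` and `Φ(cb) = Φ(c)b` for all `c`: visibly a unital star-subalgebra, and
WOT-closed because one-sided multiplications are WOT-continuous. Being norm-closed as well, it
contains `C*(1, A)` for each of its elements `A`.
-/

open scoped Matrix InnerProductSpace Topology

/-- A map between star rings is *completely positive* if, for every `n`, applying it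
entrywise to `n × n` matrices sends positive elements (i.e. those of the form `Nᴴ * N`)
of the matrix ring over the domain to positive elements of the matrix ring over the
codomain. -/
def CompletelyPositive {A B : Type*} [NonUnitalNonAssocSemiring A] [StarRing A]
    [NonUnitalNonAssocSemiring B] [StarRing B] (Φ : A → B) : Prop :=
  ∀ n : ℕ, ∀ M : Matrix (Fin n) (Fin n) A,
    (∃ N : Matrix (Fin n) (Fin n) A, M = Nᴴ * N) →
      ∃ P : Matrix (Fin n) (Fin n) B, M.map Φ = Pᴴ * P

/-- The weak operator topology on `B(H)`: the topology of pointwise convergence of the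
scalar pairings `T ↦ ⟪T x, y⟫` for `x y : H`. -/
noncomputable def wot (H : Type*) [NormedAddCommGroup H] [InnerProductSpace ℂ H] :
    TopologicalSpace (H →L[ℂ] H) :=
  TopologicalSpace.induced
    (fun T : H →L[ℂ] H => fun p : H × H => (⟪T p.1, p.2⟫_ℂ)) inferInstance

theorem sum_star_mul_self_eq_zero_iff {B ι : Type*} [NonUnitalNormedRing B] [StarRing B]
    [CStarRing B] [PartialOrder B] [StarOrderedRing B] [Fintype ι] (s : ι → B) :
    ∑ k, star (s k) * s k = 0 ↔ ∀ k, s k = 0 := by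
  simp [Finset.sum_eq_zero_iff_of_nonneg fun k _ => star_mul_self_nonneg (s k)]

theorem eq_mul_of_sum_star_mul_eq {B ι : Type*} [NormedRing B] [StarRing B] [CStarRing B]
    [PartialOrder B] [StarOrderedRing B] [Fintype ι] {p q : ι → B} {x : B}
    (hpp : ∑ k, star (p k) * p k = 1) (hpq : ∑ k, star (p k) * q k = x)
    (hqq : ∑ k, star (q k) * q k = star x * x) (k : ι) : q k = p k * x := by
  have hqp : ∑ k, star (q k) * p k = star x := by
    simpa only [star_sum, star_mul, star_star] using congrArg star hpq
  have hexpand : ∑ k, star (q k - p k * x) * (q k - p k * x)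
      = ∑ k, star (q k) * q k - (∑ k, star (q k) * p k) * x
        - star x * ∑ k, star (p k) * q k + star x * (∑ k, star (p k) * p k) * x := by
    simp only [star_sub, star_mul, sub_mul, mul_sub, Finset.sum_sub_distrib,
      Finset.sum_mul, Finset.mul_sum, mul_assoc]
    abel
  rw [hpp, hpq, hqp, hqq, mul_one, sub_self, zero_sub, neg_add_cancel] at hexpand
  exact sub_eq_zero.mp ((sum_star_mul_self_eq_zero_iff _).mp hexpand k)

namespace CompletelyPositive

variable {A B : Type*}

theorem exists_gram [NonUnitalNonAssocSemiring A] [StarRing A] [NonUnitalNonAssocSemiring B]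
    [StarRing B] {Φ : A → B} (hΦ : CompletelyPositive Φ) {n : ℕ} (v : Fin (n + 1) → A) :
    ∃ P : Matrix (Fin (n + 1)) (Fin (n + 1)) B,
      ∀ i j, Φ (star (v i) * v j) = ∑ k, star (P k i) * P k j := by
  let N : Matrix (Fin (n + 1)) (Fin (n + 1)) A := Matrix.of fun i j => if i = 0 then v j else 0
  obtain ⟨P, hP⟩ := hΦ _ (Nᴴ * N) ⟨N, rfl⟩
  refine ⟨P, fun i j => ?_⟩
  simpa [N, Matrix.mul_apply, Fin.sum_univ_succ] using congrFun₂ hP i j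

theorem map_star [NonAssocSemiring A] [StarRing A] [NonUnitalNonAssocSemiring B] [StarRing B]
    {Φ : A → B} (hΦ : CompletelyPositive Φ) (a : A) : Φ (star a) = star (Φ a) := by
  obtain ⟨P, hP⟩ := hΦ.exists_gram ![1, a]
  have h01 := hP 0 1
  have h10 := hP 1 0
  simp only [Matrix.cons_val_zero, Matrix.cons_val_one, star_one, one_mul, mul_one] at h01 h10
  simp [h10, h01, star_mul]

variable [NonAssocSemiring A] [StarRing A] [NormedRing B] [StarRing B] [CStarRing B]
  [PartialOrder B] [StarOrderedRing B] {Φ : A → B}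

/-- Choi's multiplicative-domain lemma. -/
theorem map_star_mul_of_map_star_mul_self (hΦ : CompletelyPositive Φ) (h1 : Φ 1 = 1) {a : A}
    (ha : Φ (star a * a) = star (Φ a) * Φ a) (b : A) :
    Φ (star a * b) = star (Φ a) * Φ b := by
  obtain ⟨P, hP⟩ := hΦ.exists_gram ![1, a, b]
  have hq : ∀ k, P k 1 = P k 0 * Φ a :=
    eq_mul_of_sum_star_mul_eq (by simpa [h1] using (hP 0 0).symm)
      (by simpa using (hP 0 1).symm) (by simpa [ha] using (hP 1 1).symm)
  calc Φ (star a * b) = ∑ k, star (P k 1) * P k 2 := hP 1 2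
    _ = star (Φ a) * ∑ k, star (P k 0) * P k 2 := by
      simp only [hq, star_mul, Finset.mul_sum, mul_assoc]
    _ = star (Φ a) * Φ b := by simpa using congrArg (star (Φ a) * ·) (hP 0 2).symm

theorem map_mul_of_map_star_mul_self (hΦ : CompletelyPositive Φ) (h1 : Φ 1 = 1) {a : A}
    (ha : Φ (star a * a) = star (Φ a) * Φ a) (b : A) : Φ (b * a) = Φ b * Φ a := by
  have h := hΦ.map_star_mul_of_map_star_mul_self h1 ha (star b)
  rw [← star_star (b * a), hΦ.map_star, star_mul, h, hΦ.map_star, star_mul, star_star,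
    star_star]

theorem map_mul_of_map_mul_star_self (hΦ : CompletelyPositive Φ) (h1 : Φ 1 = 1) {a : A}
    (ha : Φ (a * star a) = Φ a * star (Φ a)) (b : A) : Φ (a * b) = Φ a * Φ b := by
  have ha' : Φ (star (star a) * star a) = star (Φ (star a)) * Φ (star a) := by
    rw [star_star, hΦ.map_star, star_star, ha]
  simpa only [star_star, hΦ.map_star] using hΦ.map_star_mul_of_map_star_mul_self h1 ha' b

end CompletelyPositive

namespace LinearMap

variable {R A : Type*} [CommSemiring R] [StarRing R] [Semiring A] [StarRing A] [Algebra R A]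
  [StarModule R A]

/-- The fixed points of `Φ` lying in its multiplicative domain. -/
def fixedMulDomain (Φ : A →ₗ[R] A) (h1 : Φ 1 = 1) (hstar : ∀ a, Φ (star a) = star (Φ a)) :
    StarSubalgebra R A where
  carrier := {b | Φ b = b ∧ (∀ c, Φ (b * c) = b * Φ c) ∧ ∀ c, Φ (c * b) = Φ c * b}
  mul_mem' := by
    rintro x y ⟨hx, hxl, hxr⟩ ⟨hy, hyl, hyr⟩
    refine ⟨by rw [hxl, hy], fun c => ?_, fun c => ?_⟩
    · rw [mul_assoc, hxl, hyl, mul_assoc]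
    · rw [← mul_assoc, hyr, hxr, mul_assoc]
  add_mem' := by
    rintro x y ⟨hx, hxl, hxr⟩ ⟨hy, hyl, hyr⟩
    refine ⟨by rw [map_add, hx, hy], fun c => ?_, fun c => ?_⟩
    · rw [add_mul, map_add, hxl, hyl, add_mul]
    · rw [mul_add, map_add, hxr, hyr, mul_add]
  algebraMap_mem' r := by
    refine ⟨?_, fun c => ?_, fun c => ?_⟩ <;>
      simp [Algebra.algebraMap_eq_smul_one, h1]
  star_mem' := by
    rintro b ⟨hb, hbl, hbr⟩
    refine ⟨by rw [hstar, hb], fun c => ?_, fun c => ?_⟩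
    · rw [← star_star c, ← star_mul, hstar, hbr, star_mul, hstar, star_star, star_star]
    · rw [← star_star c, ← star_mul, hstar, hbl, star_mul, hstar, star_star, star_star]

end LinearMap

theorem CompletelyPositive.mem_fixedMulDomain_iff {A : Type*} [CStarAlgebra A] [PartialOrder A]
    [StarOrderedRing A] {Φ : A →ₗ[ℂ] A} (hΦ : CompletelyPositive Φ) (h1 : Φ 1 = 1) {a : A} :
    a ∈ Φ.fixedMulDomain h1 hΦ.map_star ↔
      Φ a = a ∧ Φ (star a * a) = star a * a ∧ Φ (a * star a) = a * star a := by
  constructor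
  · rintro ⟨ha, hal, har⟩
    exact ⟨ha, by rw [har, hΦ.map_star, ha], by rw [hal, hΦ.map_star, ha]⟩
  · rintro ⟨ha, hsa, has⟩
    refine ⟨ha, fun c => ?_, fun c => ?_⟩
    · rw [hΦ.map_mul_of_map_mul_star_self h1 (by rw [ha, has]), ha]
    · rw [hΦ.map_mul_of_map_star_mul_self h1 (by rw [ha, hsa]), ha]

section WeakOperatorTopology

variable {H : Type*} [NormedAddCommGroup H] [InnerProductSpace ℂ H]

theorem continuous_wot_iff {α : Type*} [TopologicalSpace α] {g : α → H →L[ℂ] H} :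
    Continuous[inferInstance, wot H] g ↔ ∀ x y, Continuous fun a => ⟪g a x, y⟫_ℂ :=
  continuous_induced_rng.trans ⟨fun h x y => continuous_apply (x, y) |>.comp h,
    fun h => continuous_pi fun p => h p.1 p.2⟩

theorem continuous_inner_apply_wot (x y : H) :
    Continuous[wot H, inferInstance] fun T : H →L[ℂ] H => ⟪T x, y⟫_ℂ :=
  (@continuous_wot_iff _ _ _ _ (wot H) id).mp (@continuous_id _ (wot H)) x y

theorem t2Space_wot : @T2Space (H →L[ℂ] H) (wot H) := by
  let _ := wot H
  refine .of_injective_continuous (fun S T hST => ?_) continuous_induced_dom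
  exact ContinuousLinearMap.ext fun x => ext_inner_right ℂ fun y => congrFun hST (x, y)

theorem continuous_wot_mul_right (c : H →L[ℂ] H) :
    Continuous[wot H, wot H] fun T : H →L[ℂ] H => T * c :=
  @continuous_wot_iff _ _ _ _ (wot H) _ |>.mpr fun x y => continuous_inner_apply_wot (c x) y

theorem continuous_wot_mul_left [CompleteSpace H] (c : H →L[ℂ] H) :
    Continuous[wot H, wot H] fun T : H →L[ℂ] H => c * T := by
  refine @continuous_wot_iff _ _ _ _ (wot H) _ |>.mpr fun x y => ?_
  simpa only [mul_apply_eq_comp, ContinuousLinearMap.adjoint_inner_right]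
    using continuous_inner_apply_wot x (ContinuousLinearMap.adjoint c y)

theorem IsClosed.of_wot {s : Set (H →L[ℂ] H)} (hs : IsClosed[wot H] s) : IsClosed s :=
  @IsClosed.preimage _ _ _ (wot H) id (continuous_wot_iff.mpr fun x _ =>
    ((ContinuousLinearMap.apply ℂ H x).continuous).inner continuous_const) _ hs

theorem isClosed_wot_fixedMulDomain [CompleteSpace H] {Φ : (H →L[ℂ] H) →ₗ[ℂ] (H →L[ℂ] H)}
    (hΦ : Continuous[wot H, wot H] Φ) (h1 : Φ 1 = 1)
    (hstar : ∀ a, Φ (star a) = star (Φ a)) :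
    IsClosed[wot H] (Φ.fixedMulDomain h1 hstar : Set (H →L[ℂ] H)) := by
  let _ := wot H
  have := t2Space_wot (H := H)
  show IsClosed {b | Φ b = b ∧ (∀ c, Φ (b * c) = b * Φ c) ∧ ∀ c, Φ (c * b) = Φ c * b}
  simp only [Set.ofPred_and, Set.ofPred_forall]
  exact (isClosed_eq hΦ continuous_id).inter <|
    (isClosed_iInter fun c => isClosed_eq (hΦ.comp (continuous_wot_mul_right c))
      (continuous_wot_mul_right (Φ c))).inter <|
    isClosed_iInter fun c => isClosed_eq (hΦ.comp (continuous_wot_mul_left c))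
      (continuous_wot_mul_left (Φ c))

end WeakOperatorTopology

/-- **Theorem 5.5.(a) (second-order set of constants).** Let `Φ : B(H) → B(H)` be a
unital completely positive map, continuous for the weak operator topology, and let
`C₂ = {A | Φ(A) = A, Φ(A*A) = A*A, Φ(AA*) = AA*}`. Then `C₂` coincides with the set of
`A` such that `Φ` fixes all of `C*(1,A)`, it is a star-subalgebra of `B(H)` containing
the identity, and it is closed in the weak operator topology (hence a von Neumann
algebra). -/
theorem second_order_constants_vonNeumann {H : Type*}
    [NormedAddCommGroup H] [InnerProductSpace ℂ H] [CompleteSpace H]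
    (Φ : (H →L[ℂ] H) →ₗ[ℂ] (H →L[ℂ] H)) (hunital : Φ 1 = 1)
    (hcp : CompletelyPositive (⇑Φ))
    (hwcont : Continuous[wot H, wot H] (⇑Φ))
    (C₂ : Set (H →L[ℂ] H))
    (hC₂ : C₂ = {A : H →L[ℂ] H |
      Φ A = A ∧ Φ (star A * A) = star A * A ∧ Φ (A * star A) = A * star A}) :
    C₂ = {A : H →L[ℂ] H | ∀ b ∈ StarAlgebra.elemental ℂ A, Φ b = b} ∧
    (1 : H →L[ℂ] H) ∈ C₂ ∧
    (∀ x ∈ C₂, ∀ y ∈ C₂, x + y ∈ C₂) ∧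
    (∀ x ∈ C₂, ∀ y ∈ C₂, x * y ∈ C₂) ∧
    (∀ (c : ℂ), ∀ x ∈ C₂, c • x ∈ C₂) ∧
    (∀ x ∈ C₂, star x ∈ C₂) ∧
    IsClosed[wot H] C₂ := by
  set D := Φ.fixedMulDomain hunital hcp.map_star
  have hD : C₂ = D := by
    ext A
    rw [hC₂]
    exact (hcp.mem_fixedMulDomain_iff hunital).symm
  have hclosed : IsClosed[wot H] (D : Set (H →L[ℂ] H)) :=
    isClosed_wot_fixedMulDomain hwcont hunital hcp.map_star
  subst hD
  refine ⟨?_, one_mem D, fun _ hx _ hy => add_mem hx hy, fun _ hx _ hy => mul_mem hx hy,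
    fun c _ hx => SMulMemClass.smul_mem c hx, fun _ hx => star_mem hx, hclosed⟩
  ext A
  refine ⟨fun hA b hb => (StarAlgebra.elemental.le_of_mem hclosed.of_wot hA hb).1, fun hA => ?_⟩
  have hAA := StarAlgebra.elemental.self_mem ℂ A
  exact (hcp.mem_fixedMulDomain_iff hunital).mpr
    ⟨hA A hAA, hA _ (mul_mem (star_mem hAA) hAA), hA _ (mul_mem hAA (star_mem hAA))⟩
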